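/- Let n(t) := (cos t, sin t, 0) and fix κ² > 0. Define G(u) := (1/2π) ∫_{−π}^{π} |u'(t)|² dt + (κ²/2π) ∫_{−π}^{π} |u(t) × n(t)|² dt on C¹ 2π-periodic maps u : ℝ → ℝ³ satisfying (1/2π) ∫_{−π}^{π} |u(t)|² dt = 1. If u minimizes G in this class, then 0 < G(u) ≤ min{ κ²/2, 1 }. -/

import Mathlib

open Real Set MeasureTheory

/-- Squared Euclidean norm of a vector in `ℝ³`. -/
noncomputable def sq3 (v : Fin 3 → ℝ) : ℝ := v 0 ^ 2 + v 1 ^ 2 + v 2 ^ 2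

/-- The outward unit normal `n(t) = (cos t, sin t, 0)` to the unit circle. -/
noncomputable def nvec (t : ℝ) : Fin 3 → ℝ := ![Real.cos t, Real.sin t, 0]

/-- The normalized relaxed energy `G(u) = (1/2π)∫|u'|² + (κ²/2π)∫|u × n|²`. -/
noncomputable def relaxedEnergy (κ : ℝ) (u : ℝ → Fin 3 → ℝ) : ℝ :=
  (1 / (2 * π)) * (∫ t in (-π)..π, sq3 (deriv u t))
    + (κ ^ 2 / (2 * π)) * ∫ t in (-π)..π, sq3 (crossProduct (u t) (nvec t))

/-- The admissible class of the relaxed problem: `C¹` `2π`-periodic maps with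
`(1/2π)∫|u|² = 1`. -/
def AdmRelaxed (u : ℝ → Fin 3 → ℝ) : Prop :=
  ContDiff ℝ 1 u ∧ (∀ t : ℝ, u (t + 2 * π) = u t) ∧
  (1 / (2 * π)) * (∫ t in (-π)..π, sq3 (u t)) = 1

/-!
The upper bound comes from comparing with two admissible competitors: the constant unit vector
`e₁`, whose energy is `(κ²/2π) ∫ sin² = κ²/2`, and `n` itself, whose energy is `(1/2π) ∫ |n'|² = 1`.
Positivity holds for every admissible `u`, not only for minimizers: if `G(u) = 0` then `u' ≡ 0`
and `u × n ≡ 0` on `[-π, π]`, so `u` is a constant vector parallel to both `n(0)` and `n(π/2)`,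
hence zero, contradicting `(1/2π) ∫ |u|² = 1`.
-/

lemma sq3_eq_dotProduct (v : Fin 3 → ℝ) : sq3 v = v ⬝ᵥ v := by
  simp [sq3, dotProduct, Fin.sum_univ_three, sq]

lemma sq3_nonneg (v : Fin 3 → ℝ) : 0 ≤ sq3 v := by
  unfold sq3; positivity

lemma sq3_eq_zero_iff {v : Fin 3 → ℝ} : sq3 v = 0 ↔ v = 0 := by
  rw [sq3_eq_dotProduct, dotProduct_self_eq_zero]

lemma Continuous.sq3 {X : Type*} [TopologicalSpace X] {f : X → Fin 3 → ℝ} (hf : Continuous f) :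
    Continuous fun x => sq3 (f x) := by
  unfold _root_.sq3; fun_prop

lemma eqOn_zero_of_integral_eq_zero {f : ℝ → ℝ} {a b : ℝ} (hab : a < b)
    (hf : ContinuousOn f (Icc a b)) (hf0 : ∀ x ∈ Icc a b, 0 ≤ f x)
    (hI : ∫ x in a..b, f x = 0) : EqOn f 0 (Icc a b) := fun x hx => by
  by_contra hne
  refine (intervalIntegral.integral_pos hab hf (fun y hy => hf0 y (Ioc_subset_Icc_self hy))
    ⟨x, hx, (hf0 x hx).lt_of_ne' hne⟩).ne' hI

lemma eq_zero_of_cross_nvec_eq_zero {c : Fin 3 → ℝ} (h₀ : crossProduct c (nvec 0) = 0)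
    (h₁ : crossProduct c (nvec (π / 2)) = 0) : c = 0 := by
  simp [nvec, cross_apply] at h₀ h₁
  ext i; fin_cases i <;> simp [*]

lemma hasDerivAt_nvec (t : ℝ) : HasDerivAt nvec ![-sin t, cos t, 0] t := by
  refine hasDerivAt_pi.2 fun i => ?_
  fin_cases i
  exacts [hasDerivAt_cos t, hasDerivAt_sin t, hasDerivAt_const t 0]

lemma contDiff_nvec : ContDiff ℝ 1 nvec :=
  contDiff_pi.2 fun i => by fin_cases i <;> simp [nvec] <;> fun_prop

lemma continuous_cross_nvec {u : ℝ → Fin 3 → ℝ} (hu : Continuous u) :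
    Continuous fun t => crossProduct (u t) (nvec t) := by
  have := contDiff_nvec.continuous
  simp only [cross_apply]
  fun_prop

lemma admRelaxed_of_sq3_eq_one {u : ℝ → Fin 3 → ℝ} (hu : ContDiff ℝ 1 u)
    (hper : Function.Periodic u (2 * π)) (h1 : ∀ t, sq3 (u t) = 1) : AdmRelaxed u := by
  refine ⟨hu, hper, ?_⟩
  simp only [h1, intervalIntegral.integral_const, smul_eq_mul, mul_one]
  field_simp
  ring

lemma admRelaxed_nvec : AdmRelaxed nvec := by
  refine admRelaxed_of_sq3_eq_one contDiff_nvec (fun t => ?_) fun t => by simp [sq3, nvec]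
  simp [nvec]

lemma admRelaxed_const_e1 : AdmRelaxed fun _ => ![1, 0, 0] :=
  admRelaxed_of_sq3_eq_one contDiff_const (fun _ => rfl) fun _ => by simp [sq3]

lemma relaxedEnergy_nvec (κ : ℝ) : relaxedEnergy κ nvec = 1 := by
  simp [relaxedEnergy, (hasDerivAt_nvec _).deriv, cross_self, sq3]
  field_simp
  ring

lemma relaxedEnergy_const_e1 (κ : ℝ) : relaxedEnergy κ (fun _ => ![1, 0, 0]) = κ ^ 2 / 2 := by
  simp [relaxedEnergy, sq3, nvec, cross_apply, integral_sin_sq]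
  field_simp

lemma integral_sq3_nonneg (f : ℝ → Fin 3 → ℝ) : 0 ≤ ∫ t in (-π)..π, sq3 (f t) :=
  intervalIntegral.integral_nonneg (by linarith [pi_pos]) fun t _ => sq3_nonneg _

lemma relaxedEnergy_nonneg (κ : ℝ) (u : ℝ → Fin 3 → ℝ) : 0 ≤ relaxedEnergy κ u := by
  have := integral_sq3_nonneg (deriv u)
  have := integral_sq3_nonneg fun t => crossProduct (u t) (nvec t)
  unfold relaxedEnergy
  positivity

lemma eqOn_of_integral_sq3_deriv_eq_zero {u : ℝ → Fin 3 → ℝ} {a b : ℝ} (hab : a < b)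
    (hu : ContDiff ℝ 1 u) (h : ∫ t in a..b, sq3 (deriv u t) = 0) :
    ∀ t ∈ Icc a b, u t = u a := by
  have hderiv : ∀ t ∈ Icc a b, deriv u t = 0 := fun t ht => sq3_eq_zero_iff.1 <|
    eqOn_zero_of_integral_eq_zero hab (hu.continuous_deriv le_rfl).sq3.continuousOn
      (fun _ _ => sq3_nonneg _) h ht
  refine constant_of_has_deriv_right_zero hu.continuous.continuousOn fun t ht => ?_
  simpa [hderiv t (Ico_subset_Icc_self ht)] using
    ((hu.differentiable one_ne_zero) t).hasDerivAt.hasDerivWithinAt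

lemma relaxedEnergy_pos {κ : ℝ} (hκ : 0 < κ ^ 2) {u : ℝ → Fin 3 → ℝ} (hu : ContDiff ℝ 1 u)
    (hL2 : ∫ t in (-π)..π, sq3 (u t) ≠ 0) : 0 < relaxedEnergy κ u := by
  refine (relaxedEnergy_nonneg κ u).lt_of_ne' fun hG => hL2 ?_
  have hπ := pi_pos
  have hD := integral_sq3_nonneg (deriv u)
  have hX := integral_sq3_nonneg fun t => crossProduct (u t) (nvec t)
  obtain ⟨hD0, hX0⟩ : ∫ t in (-π)..π, sq3 (deriv u t) = 0 ∧
      ∫ t in (-π)..π, sq3 (crossProduct (u t) (nvec t)) = 0 := by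
    have ha : 0 < 1 / (2 * π) := by positivity
    have hb : 0 < κ ^ 2 / (2 * π) := by positivity
    unfold relaxedEnergy at hG
    constructor <;> nlinarith [mul_nonneg ha.le hD, mul_nonneg hb.le hX]
  have hconst := eqOn_of_integral_sq3_deriv_eq_zero (by linarith) hu hD0
  have hcross : ∀ t ∈ Icc (-π) π, crossProduct (u (-π)) (nvec t) = 0 := fun t ht => by
    rw [← hconst t ht]
    exact sq3_eq_zero_iff.1 <| eqOn_zero_of_integral_eq_zero (by linarith)
      (continuous_cross_nvec hu.continuous).sq3.continuousOn (fun _ _ => sq3_nonneg _) hX0 ht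
  have hzero : u (-π) = 0 := eq_zero_of_cross_nvec_eq_zero
    (hcross 0 ⟨by linarith, by linarith⟩) (hcross (π / 2) ⟨by linarith, by linarith⟩)
  rw [intervalIntegral.integral_congr (g := fun _ => 0) fun t ht => ?_,
    intervalIntegral.integral_zero]
  rw [uIcc_of_le (by linarith)] at ht
  simp [hconst t ht, hzero, sq3]

/-- **Energy bounds for minimizers of the relaxed problem**: any minimizer `u`
of `G` under the `L²` constraint satisfies `0 < G(u) ≤ min{κ²/2, 1}`. -/
theorem relaxed_minimizer_energy_bounds
    (κ : ℝ) (hκ : 0 < κ ^ 2)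
    (u : ℝ → Fin 3 → ℝ)
    (hu : AdmRelaxed u)
    (hmin : ∀ v : ℝ → Fin 3 → ℝ, AdmRelaxed v →
      relaxedEnergy κ u ≤ relaxedEnergy κ v) :
    0 < relaxedEnergy κ u ∧ relaxedEnergy κ u ≤ min (κ ^ 2 / 2) 1 := by
  obtain ⟨hC1, -, hL2⟩ := hu
  refine ⟨relaxedEnergy_pos hκ hC1 fun h => by simp [h] at hL2, le_min ?_ ?_⟩
  · simpa [relaxedEnergy_const_e1] using hmin _ admRelaxed_const_e1
  · simpa [relaxedEnergy_nvec] using hmin _ admRelaxed_nvec
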